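/- arXiv:2212.01024 — 2 statements merged into one kernel-verified Lean document; each statement's English description precedes it below -/
import Mathlib

section
/- Any finite or countable union of uniformly recurrent languages L satisfies the measure condition: there exists a shift-invariant Borel probability measure μ on the associated subshift (X_L, S) with μ([w]) > 0 for every w ∈ L. -/
open List Set

variable {A : Type*}

/-- A (factorial, extendable) language over an alphabet `A`. -/
def IsLanguage (L : Set (List A)) : Prop :=
  (∀ w ∈ L, ∀ v : List A, v <:+: w → v ∈ L) ∧
  (∀ w ∈ L, ∃ a : A, a :: w ∈ L) ∧
  (∀ w ∈ L, ∃ a : A, w ++ [a] ∈ L)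

/-- Arrival set `A(w)`. -/
def arrSet (L : Set (List A)) (w : List A) : Set A := {a | a :: w ∈ L}

/-- Departure set `D(w)`. -/
def depSet (L : Set (List A)) (w : List A) : Set A := {a | w ++ [a] ∈ L}

def Bispecial (L : Set (List A)) (w : List A) : Prop :=
  1 < (arrSet L w).ncard ∧ 1 < (depSet L w).ncard

/-- `m(w) = #{awb ∈ L}`. -/
noncomputable def extCount (L : Set (List A)) (w : List A) : ℕ :=
  {p : A × A | p.1 :: (w ++ [p.2]) ∈ L}.ncard

def StrongBispecial (L : Set (List A)) (w : List A) : Prop :=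
  Bispecial L w ∧ (arrSet L w).ncard + (depSet L w).ncard - 1 < extCount L w

def WeakBispecial (L : Set (List A)) (w : List A) : Prop :=
  Bispecial L w ∧ extCount L w < (arrSet L w).ncard + (depSet L w).ncard - 1

def LocallyStrongBispecial (L : Set (List A)) (w : List A) : Prop :=
  Bispecial L w ∧ ∃ A' D' : Set A, A'.Nonempty ∧ D'.Nonempty ∧
    A' ⊆ arrSet L w ∧ D' ⊆ depSet L w ∧
    A'.ncard + D'.ncard - 1 <
      {p : A × A | p.1 ∈ A' ∧ p.2 ∈ D' ∧ p.1 :: (w ++ [p.2]) ∈ L}.ncard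

/-- The order condition at a single bispecial word, for orders `rA`, `rD`. -/
def OrderConditionAt (L : Set (List A)) (w : List A) (rA rD : A → A → Prop) : Prop :=
  ∀ a b c d : A, a ≠ b → c ≠ d →
    a :: (w ++ [c]) ∈ L → b :: (w ++ [d]) ∈ L → (rA a b ↔ rD c d)

/-- The local order condition. -/
def LocalOrderCondition (L : Set (List A)) : Prop :=
  ∀ w : List A, Bispecial L w → ∃ rA rD : A → A → Prop,
    IsStrictTotalOrder A rA ∧ IsStrictTotalOrder A rD ∧ OrderConditionAt L w rA rD

/-- `a` and `a'` are consecutive in the strict order `r`. -/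
def ConsecutiveIn (r : A → A → Prop) (a a' : A) : Prop :=
  r a a' ∧ ∀ c : A, ¬ (r a c ∧ r c a')

/-- A connection for the bispecial word `w`, with respect to orders `rA`, `rD`. -/
def ConnectionWith (L : Set (List A)) (w : List A) (rA rD : A → A → Prop) : Prop :=
  ∃ a a' b b' : A, ConsecutiveIn rA a a' ∧ ConsecutiveIn rD b b' ∧
    a :: (w ++ [b]) ∈ L ∧ a' :: (w ++ [b']) ∈ L ∧
    a :: (w ++ [b']) ∉ L ∧ a' :: (w ++ [b]) ∉ L

/-- `w` has a connection (for some orders realizing the order condition at `w`). -/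
def HasConnection (L : Set (List A)) (w : List A) : Prop :=
  ∃ rA rD : A → A → Prop, IsStrictTotalOrder A rA ∧ IsStrictTotalOrder A rD ∧
    OrderConditionAt L w rA rD ∧ ConnectionWith L w rA rD

/-- Complexity function `p(n)`. -/
noncomputable def complexityFn (L : Set (List A)) (n : ℕ) : ℕ :=
  {w ∈ L | w.length = n}.ncard

def UniformlyRecurrent (L : Set (List A)) : Prop :=
  ∀ v ∈ L, ∃ n : ℕ, ∀ u ∈ L, u.length = n → v <:+: u

def LangRecurrent (L : Set (List A)) : Prop :=
  ∀ v ∈ L, ∃ u : List A, u ≠ [] ∧ v ++ u ∈ L ∧ v <:+ v ++ u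

def LangAperiodic (L : Set (List A)) : Prop :=
  ∀ w ∈ L, w ≠ [] → ∃ n : ℕ, (List.replicate n w).flatten ∉ L

def LeftSpecial (L : Set (List A)) (w : List A) : Prop := 1 < (arrSet L w).ncard

def RightSpecial (L : Set (List A)) (w : List A) : Prop := 1 < (depSet L w).ncard

/-- The two-sided subshift associated to `L`. -/
def XL (L : Set (List A)) : Set (ℤ → A) :=
  {x | ∀ (m : ℤ) (n : ℕ), (List.ofFn fun i : Fin n => x (m + (i : ℕ))) ∈ L}

def occursAtZ (x : ℤ → A) (m : ℤ) (w : List A) : Prop :=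
  (List.ofFn fun i : Fin w.length => x (m + (i : ℕ))) = w

def FactorsZ (x : ℤ → A) : Set (List A) := {w | ∃ m : ℤ, occursAtZ x m w}

def RightRec (x : ℤ → A) : Prop :=
  ∀ w ∈ FactorsZ x, ∀ N : ℤ, ∃ m : ℤ, N ≤ m ∧ occursAtZ x m w

def LeftRec (x : ℤ → A) : Prop :=
  ∀ w ∈ FactorsZ x, ∀ N : ℤ, ∃ m : ℤ, m ≤ N ∧ occursAtZ x m w

def RecurrentZ (x : ℤ → A) : Prop := RightRec x ∧ LeftRec x

/-- The `F`-flipped order condition, with orders `rA` (arrival) and `rD` (departure):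
the departure order is reversed when the number of `F`-letters of `w` is odd. -/
def FlippedOC [DecidableEq A] (L : Set (List A)) (F : Finset A)
    (rA rD : A → A → Prop) : Prop :=
  ∀ w : List A, Bispecial L w → ∀ a b c d : A, a ≠ b → c ≠ d →
    a :: (w ++ [c]) ∈ L → b :: (w ++ [d]) ∈ L →
    (rA a b ↔ if Even (w.countP fun e => decide (e ∈ F)) then rD c d else rD d c)

/-- A generalized `F`-flipped interval exchange transformation. -/
structure GIET (A : Type*) (F : Finset A) where
  l : A → ℝ
  r : A → ℝ
  T : ℝ → ℝ
  lt : ∀ e, l e < r e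
  sub : ∀ e, Set.Ioo (l e) (r e) ⊆ Set.Ioo (0 : ℝ) 1
  disj : ∀ e f, e ≠ f → Disjoint (Set.Ioo (l e) (r e)) (Set.Ioo (l f) (r f))
  cover : Set.Icc (0 : ℝ) 1 = ⋃ e, Set.Icc (l e) (r e)
  cont : ∀ e, ContinuousOn T (Set.Ioo (l e) (r e))
  inc : ∀ e ∉ F, StrictMonoOn T (Set.Ioo (l e) (r e))
  dec : ∀ e ∈ F, StrictAntiOn T (Set.Ioo (l e) (r e))
  l' : A → ℝ
  r' : A → ℝ
  lt' : ∀ e, l' e < r' e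
  img : ∀ e, T '' Set.Ioo (l e) (r e) = Set.Ioo (l' e) (r' e)
  disj' : ∀ e f, e ≠ f → Disjoint (Set.Ioo (l' e) (r' e)) (Set.Ioo (l' f) (r' f))
  cover' : Set.Icc (0 : ℝ) 1 = ⋃ e, Set.Icc (l' e) (r' e)

variable {F : Finset A}

/-- A bi-infinite orbit of `G`, with symbolic itinerary `u`. -/
def GIET.IsOrbit (G : GIET A F) (u : ℤ → A) (p : ℤ → ℝ) : Prop :=
  (∀ n : ℤ, G.T (p n) = p (n + 1)) ∧
  ∀ n : ℤ, p n ∈ Set.Ioo (G.l (u n)) (G.r (u n))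

/-- The natural coding `L(T)`: the language generated by all trajectories. -/
def GIET.lang (G : GIET A F) : Set (List A) :=
  {w | ∃ (u : ℤ → A) (p : ℤ → ℝ), G.IsOrbit u p ∧
    ∃ m : ℤ, (List.ofFn fun i : Fin w.length => u (m + (i : ℕ))) = w}

open MeasureTheory

/-- The shift map on `A^ℤ`. -/
def shiftZ (x : ℤ → A) : ℤ → A := fun n => x (n + 1)

/-!
Krylov–Bogolyubov: for a continuous map `T` of a compact metrizable space, a weak-* limit point
of the orbit averages `(n + 1)⁻¹ ∑_{k ≤ n} δ_{T^k x}` is `T`-invariant, since the averages of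
`f ∘ T` and of `f` differ by `(f (T^{n+1} x) - f x) / (n + 1)`. Applied to the shift on the
subshift `X_{Lᵢ}`, which is compact and (by compactness, `Lᵢ` being extendable) nonempty, this
gives an invariant probability measure `μᵢ` on `X_{Lᵢ}`. If every word of `Lᵢ` of length `n`
contains `w`, then the preimages `S^{-k} [w]`, `k ≤ n`, cover `X_{Lᵢ}`, so `μᵢ [w] ≥ 1 / (n + 1)`.
The mixture `∑ₙ 2^{-(n+1)} μ_{iₙ}` over an enumeration of the indices with `Lᵢ ≠ ∅` is invariant,
lives on `X_L ⊇ X_{Lᵢ}` and charges every `[w]` with `w ∈ L`.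
-/

open Filter Topology
open scoped ENNReal BoundedContinuousFunction

section KrylovBogolyubov

variable {E : Type*} [TopologicalSpace E] [MeasurableSpace E] [BorelSpace E]

noncomputable def orbitAverage (T : E → E) (x : E) (n : ℕ) : Measure E :=
  ((n + 1 : ℕ) : ℝ≥0∞)⁻¹ • ∑ k ∈ Finset.range (n + 1), Measure.dirac (T^[k] x)

instance (T : E → E) (x : E) (n : ℕ) : IsProbabilityMeasure (orbitAverage T x n) := by
  constructor
  simp [orbitAverage, ENNReal.inv_mul_cancel]

lemma integral_orbitAverage (T : E → E) (x : E) (n : ℕ) (f : E →ᵇ ℝ) :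
    ∫ y, f y ∂orbitAverage T x n =
      ((n + 1 : ℕ) : ℝ)⁻¹ * ∑ k ∈ Finset.range (n + 1), f (T^[k] x) := by
  rw [orbitAverage, integral_smul_measure, integral_finsetSum_measure fun k _ => f.integrable _,
    ENNReal.toReal_inv, ENNReal.toReal_natCast, smul_eq_mul]
  simp only [integral_dirac' _ _ f.continuous.stronglyMeasurable]

lemma tendsto_integral_orbitAverage_comp_sub {T : E → E} (hT : Continuous T) (x : E)
    (f : E →ᵇ ℝ) :
    Tendsto (fun n => ∫ y, f (T y) ∂orbitAverage T x n - ∫ y, f y ∂orbitAverage T x n)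
      atTop (𝓝 0) := by
  have htelescope (n : ℕ) :
      ∫ y, f (T y) ∂orbitAverage T x n - ∫ y, f y ∂orbitAverage T x n =
        ((n + 1 : ℕ) : ℝ)⁻¹ * (f (T^[n + 1] x) - f x) := by
    have h := integral_orbitAverage T x n (f.compContinuous ⟨T, hT⟩)
    simp only [BoundedContinuousFunction.compContinuous_apply, ContinuousMap.coe_mk,
      ← Function.iterate_succ_apply' T] at h
    rw [h, integral_orbitAverage, ← mul_sub, ← Finset.sum_sub_distrib,
      Finset.sum_range_sub (fun k => f (T^[k] x))]
    rfl
  simp_rw [htelescope]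
  refine squeeze_zero_norm (fun n => ?_) ((tendsto_const_div_atTop_nhds_zero_nat (2 * ‖f‖)).comp
    (tendsto_add_atTop_nat 1))
  rw [norm_mul, norm_inv, Real.norm_natCast, inv_mul_eq_div, Function.comp_apply]
  gcongr
  exact (dist_eq_norm _ _).symm.trans_le (f.dist_le_two_norm _ _)

variable [CompactSpace E] [T2Space E] [HasOuterApproxClosed E]

theorem exists_isProbabilityMeasure_measurePreserving [Nonempty E] {T : E → E}
    (hT : Continuous T) :
    ∃ μ : Measure E, IsProbabilityMeasure μ ∧ MeasurePreserving T μ μ := by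
  obtain ⟨x⟩ := ‹Nonempty E›
  let ν (n : ℕ) : ProbabilityMeasure E := ⟨orbitAverage T x n, inferInstance⟩
  let U : Ultrafilter ℕ := Ultrafilter.of atTop
  obtain ⟨μ, -, hμ⟩ :=
    isCompact_univ.ultrafilter_le_nhds (U.map ν) (le_principal_iff.2 univ_mem)
  have hν : Tendsto ν U (𝓝 μ) := hμ
  have hTν : Tendsto (fun n => (ν n).map hT.aemeasurable) U (𝓝 μ) := by
    rw [ProbabilityMeasure.tendsto_iff_forall_integral_tendsto] at hν ⊢
    intro f
    have := (hν f).add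
      ((tendsto_integral_orbitAverage_comp_sub hT x f).mono_left (Ultrafilter.of_le _))
    simp only [add_zero] at this
    convert this using 2 with n
    rw [ProbabilityMeasure.toMeasure_map,
      integral_map hT.aemeasurable f.continuous.aestronglyMeasurable]
    exact (add_sub_cancel _ _).symm
  have hfix := tendsto_nhds_unique
    (ProbabilityMeasure.tendsto_map_of_tendsto_of_continuous ν μ hν hT) hTν
  refine ⟨μ, inferInstance, hT.measurable, ?_⟩
  rw [← ProbabilityMeasure.toMeasure_map μ hT.aemeasurable, hfix]

end KrylovBogolyubov

theorem exists_isProbabilityMeasure_measurePreserving_of_mapsTo {E : Type*} [TopologicalSpace E]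
    [MeasurableSpace E] [BorelSpace E] [CompactSpace E] [T2Space E]
    [TopologicalSpace.PseudoMetrizableSpace E] {K : Set E} (hK : IsClosed K) (hKne : K.Nonempty)
    {T : E → E} (hT : Continuous T) (hTK : MapsTo T K K) :
    ∃ μ : Measure E, IsProbabilityMeasure μ ∧ MeasurePreserving T μ μ ∧ μ K = 1 := by
  have := isCompact_iff_compactSpace.mp hK.isCompact
  have := hKne.to_subtype
  obtain ⟨ν, hν, hνT⟩ := exists_isProbabilityMeasure_measurePreserving (hT.restrict hTK)
  refine ⟨ν.map (↑), Measure.isProbabilityMeasure_map measurable_subtype_coe.aemeasurable, ?_,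
    ?_⟩
  · refine ⟨hT.measurable, ?_⟩
    rw [Measure.map_map hT.measurable measurable_subtype_coe]
    exact ((MeasurePreserving.mk measurable_subtype_coe rfl).comp hνT).map_eq
  · rw [Measure.map_apply measurable_subtype_coe hK.measurableSet, Subtype.coe_preimage_self,
      measure_univ]

theorem exists_measurePreserving_measure_eq_zero_iff {X : Type*} [MeasurableSpace X] {ι : Type*}
    [Countable ι] [Nonempty ι] (ν : ι → Measure X) [∀ i, IsProbabilityMeasure (ν i)]
    {T : X → X} (hT : ∀ i, MeasurePreserving T (ν i) (ν i)) :
    ∃ μ : Measure X, IsProbabilityMeasure μ ∧ MeasurePreserving T μ μ ∧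
      ∀ s, μ s = 0 ↔ ∀ i, ν i s = 0 := by
  obtain ⟨e, he⟩ := exists_surjective_nat ι
  obtain ⟨i₀⟩ := ‹Nonempty ι›
  have hTm := (hT i₀).measurable
  let μ := Measure.sum fun n : ℕ => (2⁻¹ : ℝ≥0∞) ^ (n + 1) • ν (e n)
  refine ⟨μ, ⟨?_⟩, ⟨hTm, ?_⟩, fun s => ?_⟩
  · simp [μ, ENNReal.tsum_geometric_add_one, ENNReal.one_sub_inv_two, ENNReal.inv_mul_cancel]
  · simp [μ, Measure.map_sum hTm.aemeasurable, Measure.map_smul, (hT _).map_eq]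
  · simp [μ, he.forall]

section Trim

open MeasurableSpace

variable {X Y : Type*} {mX mX₀ : MeasurableSpace X} {mY mY₀ : MeasurableSpace Y}

lemma isProbabilityMeasure_trim {μ : Measure[mX₀] X} [IsProbabilityMeasure μ]
    (hX : mX ≤ mX₀) :
    IsProbabilityMeasure (μ.trim hX) :=
  ⟨by rw [trim_measurableSet_eq hX MeasurableSet.univ, measure_univ]⟩

lemma MeasureTheory.MeasurePreserving.trim {μ : Measure[mX₀] X} {ν : Measure[mY₀] Y}
    {T : X → Y} (hT : MeasurePreserving T μ ν) (hX : mX ≤ mX₀) (hY : mY ≤ mY₀)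
    (hTm : Measurable[mX, mY] T) :
    @MeasurePreserving X Y mX mY T (μ.trim hX) (ν.trim hY) := by
  refine @MeasurePreserving.mk X Y mX mY _ _ _ hTm (@Measure.ext _ mY _ _ fun s hs => ?_)
  rw [@Measure.map_apply _ _ mX mY _ _ hTm _ hs, trim_measurableSet_eq hY hs,
    trim_measurableSet_eq hX (hTm hs), hT.measure_preimage (hY s hs).nullMeasurableSet]

end Trim

section Subshift

variable {B : Type*}

def wordCylinder (w : List B) : Set (ℤ → B) :=
  {x | (List.ofFn fun i : Fin w.length => x ((i : ℕ) : ℤ)) = w}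

lemma shiftZ_iterate_apply (k : ℕ) (x : ℤ → B) (j : ℤ) : shiftZ^[k] x j = x (j + k) := by
  induction k generalizing x with
  | zero => simp
  | succ k ih => rw [Function.iterate_succ_apply, ih]; simp [shiftZ, add_assoc]

lemma XL_mono {L₁ L₂ : Set (List B)} (h : L₁ ⊆ L₂) : XL L₁ ⊆ XL L₂ :=
  fun _ hx m n => h (hx m n)

lemma mapsTo_shiftZ_XL (L : Set (List B)) : MapsTo shiftZ (XL L) (XL L) := fun x hx m n => by
  simpa [shiftZ, add_right_comm] using hx (m + 1) n

lemma continuous_shiftZ [TopologicalSpace B] : Continuous (shiftZ : (ℤ → B) → ℤ → B) :=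
  continuous_pi fun j => continuous_apply (j + 1)

lemma measurable_shiftZ [MeasurableSpace B] : Measurable (shiftZ : (ℤ → B) → ℤ → B) :=
  measurable_pi_lambda _ fun j => measurable_pi_apply (j + 1)

lemma isClopen_setOf_ofFn [TopologicalSpace B] [DiscreteTopology B] {n : ℕ} (g : Fin n → ℤ)
    (P : List B → Prop) : IsClopen {x : ℤ → B | P (List.ofFn fun i => x (g i))} :=
  (isClopen_discrete {f : Fin n → B | P (List.ofFn f)}).preimage
    (continuous_pi fun i => continuous_apply (g i))

lemma isClosed_XL [TopologicalSpace B] [DiscreteTopology B] (L : Set (List B)) :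
    IsClosed (XL L) := by
  simp only [XL, ofPred_forall]
  exact isClosed_iInter fun m => isClosed_iInter fun n => (isClopen_setOf_ofFn _ _).isClosed

lemma measurableSet_wordCylinder [MeasurableSpace B] [MeasurableSingletonClass B] (w : List B) :
    MeasurableSet (wordCylinder w) := by
  have hsub : {f : Fin w.length → B | List.ofFn f = w}.Subsingleton :=
    fun f hf g hg => List.ofFn_injective (hf.trans hg.symm)
  exact hsub.measurableSet.preimage (measurable_pi_lambda _ fun i => measurable_pi_apply _)

lemma ofFn_infix_ofFn (x : ℤ → B) {m₁ m₂ : ℤ} {l₁ l₂ : ℕ} (h₁ : m₂ ≤ m₁)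
    (h₂ : m₁ + l₁ ≤ m₂ + l₂) :
    (List.ofFn fun i : Fin l₁ => x (m₁ + i)) <:+:
      List.ofFn fun i : Fin l₂ => x (m₂ + i) := by
  have hd : ((m₁ - m₂).toNat : ℤ) = m₁ - m₂ := Int.toNat_of_nonneg (by omega)
  have heq : (List.ofFn fun i : Fin l₁ => x (m₁ + i))
      = ((List.ofFn fun i : Fin l₂ => x (m₂ + i)).drop (m₁ - m₂).toNat).take l₁ := by
    refine List.ext_getElem (by simp; omega) fun i _ _ => ?_
    simp only [List.getElem_take, List.getElem_drop, List.getElem_ofFn]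
    congr 1
    push_cast
    omega
  rw [heq]
  exact (List.take_prefix _ _).isInfix.trans (List.drop_suffix _ _).isInfix

lemma ofFn_eq_of_append_eq_ofFn {x : ℤ → B} {m : ℤ} {n : ℕ} {s w t : List B}
    (h : s ++ w ++ t = List.ofFn fun i : Fin n => x (m + i)) :
    (List.ofFn fun i : Fin w.length => x (m + s.length + i)) = w := by
  have hlen : s.length + w.length ≤ n := by
    have := congrArg List.length h
    simp only [List.length_append, List.length_ofFn] at this
    omega
  refine List.ext_getElem (by simp) fun i _ hi => ?_
  have := congrArg (·[s.length + i]?) h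
  simp only [List.append_assoc, List.getElem?_append_right (Nat.le_add_right _ _),
    Nat.add_sub_cancel_left, List.getElem?_append_left hi, List.getElem?_ofFn] at this
  rw [List.getElem?_eq_getElem hi, dif_pos (by omega), Option.some_inj] at this
  rw [List.getElem_ofFn, this]
  push_cast
  ring_nf

lemma IsLanguage.exists_ofFn_mem {L : Set (List B)} (hL : IsLanguage L) (hne : L.Nonempty)
    (m : ℤ) (n : ℕ) : ∃ x : ℤ → B, (List.ofFn fun i : Fin n => x (m + i)) ∈ L := by
  obtain ⟨w, hw⟩ := hne
  obtain ⟨b, -⟩ := hL.2.2 w hw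
  obtain ⟨u, hu, rfl⟩ : ∃ u ∈ L, u.length = n := by
    induction n with
    | zero => exact ⟨[], hL.1 w hw [] List.nil_infix, rfl⟩
    | succ n ih =>
      obtain ⟨u, hu, rfl⟩ := ih
      obtain ⟨a, ha⟩ := hL.2.2 u hu
      exact ⟨u ++ [a], ha, by simp⟩
  refine ⟨fun k => u.getD (k - m).toNat b, ?_⟩
  convert hu
  refine List.ext_getElem (by simp) fun i _ hi => ?_
  simp

lemma IsLanguage.nonempty_XL [Finite B] {L : Set (List B)} (hL : IsLanguage L)
    (hne : L.Nonempty) : (XL L).Nonempty := by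
  let : TopologicalSpace B := ⊥
  have : DiscreteTopology B := ⟨rfl⟩
  let K (n : ℕ) : Set (ℤ → B) := {x | (List.ofFn fun i : Fin (2 * n + 1) => x (-n + i)) ∈ L}
  have hK_closed (n : ℕ) : IsClosed (K n) := (isClopen_setOf_ofFn _ _).isClosed
  have hK_anti (n : ℕ) : K (n + 1) ⊆ K n := fun x hx =>
    hL.1 _ hx _ (ofFn_infix_ofFn x (by push_cast; omega) (by push_cast; omega))
  have hK_ne (n : ℕ) : (K n).Nonempty := hL.exists_ofFn_mem hne _ _
  refine (IsCompact.nonempty_iInter_of_sequence_nonempty_isCompact_isClosed K hK_anti hK_ne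
    (hK_closed 0).isCompact hK_closed).mono fun x hx m l => ?_
  exact hL.1 _ (mem_iInter.1 hx (m.natAbs + l)) _ (ofFn_infix_ofFn x (by omega) (by omega))

lemma UniformlyRecurrent.exists_XL_subset_iUnion_preimage_wordCylinder {L : Set (List B)}
    (hur : UniformlyRecurrent L) {w : List B} (hw : w ∈ L) :
    ∃ n : ℕ, XL L ⊆ ⋃ k ∈ Finset.range (n + 1), shiftZ^[k] ⁻¹' wordCylinder w := by
  obtain ⟨n, hn⟩ := hur w hw
  refine ⟨n, fun x hx => ?_⟩
  obtain ⟨s, t, hst⟩ := hn _ (hx 0 n) (List.length_ofFn)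
  have hs : s.length ≤ n := by
    have := congrArg List.length hst
    simp only [List.length_append, List.length_ofFn] at this
    omega
  refine mem_biUnion (Finset.mem_range.2 (Nat.lt_succ_of_le hs)) ?_
  have := ofFn_eq_of_append_eq_ofFn hst
  simp only [zero_add] at this
  simpa [wordCylinder, shiftZ_iterate_apply, add_comm] using this

lemma UniformlyRecurrent.measure_wordCylinder_pos [MeasurableSpace B] [MeasurableSingletonClass B]
    {L : Set (List B)} (hur : UniformlyRecurrent L) {μ : Measure (ℤ → B)}
    (hμT : MeasurePreserving shiftZ μ μ) (hμX : μ (XL L) = 1) {w : List B} (hw : w ∈ L) :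
    0 < μ (wordCylinder w) := by
  obtain ⟨n, hcover⟩ := hur.exists_XL_subset_iUnion_preimage_wordCylinder hw
  refine pos_iff_ne_zero.2 fun h0 => ?_
  have : (1 : ℝ≥0∞) ≤ 0 := calc
    1 = μ (XL L) := hμX.symm
    _ ≤ μ (⋃ k ∈ Finset.range (n + 1), shiftZ^[k] ⁻¹' wordCylinder w) :=
      measure_mono hcover
    _ ≤ ∑ k ∈ Finset.range (n + 1), μ (shiftZ^[k] ⁻¹' wordCylinder w) :=
      measure_biUnion_finset_le _ _
    _ = 0 := by
      simp [(hμT.iterate _).measure_preimage (measurableSet_wordCylinder w).nullMeasurableSet, h0]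
  exact one_ne_zero (nonpos_iff_eq_zero.1 this)

end Subshift

section UnionOfLanguages

-- `mB` is not an instance argument, so that the discrete σ-algebra can be supplied on a type that
-- already carries another one.
variable {B : Type*} [TopologicalSpace B] [DiscreteTopology B] [Finite B] {mB : MeasurableSpace B}
  [BorelSpace B]

theorem UniformlyRecurrent.exists_invariant_measure {L : Set (List B)} (hL : IsLanguage L)
    (hur : UniformlyRecurrent L) (hne : L.Nonempty) :
    ∃ μ : Measure (ℤ → B), IsProbabilityMeasure μ ∧ MeasurePreserving shiftZ μ μ ∧
      μ (XL L) = 1 ∧ ∀ w ∈ L, 0 < μ (wordCylinder w) := by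
  obtain ⟨μ, hμ, hμT, hμX⟩ := exists_isProbabilityMeasure_measurePreserving_of_mapsTo
    (isClosed_XL L) (hL.nonempty_XL hne) continuous_shiftZ (mapsTo_shiftZ_XL L)
  exact ⟨μ, hμ, hμT, hμX, fun w hw => hur.measure_wordCylinder_pos hμT hμX hw⟩

theorem exists_invariant_measure_of_iUnion {ι : Type*} [Countable ι] {Ls : ι → Set (List B)}
    (hLs : ∀ i, IsLanguage (Ls i) ∧ UniformlyRecurrent (Ls i)) (hne : (⋃ i, Ls i).Nonempty) :
    ∃ μ : Measure (ℤ → B), IsProbabilityMeasure μ ∧ MeasurePreserving shiftZ μ μ ∧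
      μ (XL (⋃ i, Ls i)) = 1 ∧ ∀ w ∈ ⋃ i, Ls i, 0 < μ (wordCylinder w) := by
  obtain ⟨w₀, hw₀⟩ := hne
  obtain ⟨i₀, hi₀⟩ := mem_iUnion.1 hw₀
  have : Nonempty {i // (Ls i).Nonempty} := ⟨⟨i₀, w₀, hi₀⟩⟩
  choose ν hν hνT hνX hνw using fun j : {i // (Ls i).Nonempty} =>
    (hLs j).2.exists_invariant_measure (hLs j).1 j.2
  obtain ⟨μ, hμ, hμT, hμ0⟩ := exists_measurePreserving_measure_eq_zero_iff ν hνT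
  have hX := (isClosed_XL (⋃ i, Ls i)).measurableSet
  refine ⟨μ, hμ, hμT, ?_, fun w hw => ?_⟩
  · refine (prob_compl_eq_zero_iff hX).1 ((hμ0 _).2 fun j => (prob_compl_eq_zero_iff hX).2 ?_)
    exact le_antisymm prob_le_one (hνX j ▸ measure_mono (XL_mono (subset_iUnion Ls j)))
  · obtain ⟨i, hi⟩ := mem_iUnion.1 hw
    exact pos_iff_ne_zero.2 fun h => (hνw ⟨i, w, hi⟩ w hi).ne' ((hμ0 _).1 h _)

end UnionOfLanguages

theorem stmt8_general {A : Type*} [Fintype A] [MeasurableSpace A] {ι : Type*} [Countable ι]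
    (Ls : ι → Set (List A))
    (hLs : ∀ i, IsLanguage (Ls i) ∧ UniformlyRecurrent (Ls i))
    (L : Set (List A)) (hL : L = ⋃ i, Ls i)
    (hne : L.Nonempty) :
    ∃ μ : Measure (ℤ → A), IsProbabilityMeasure μ ∧
      (∀ s : Set (ℤ → A), MeasurableSet s → μ (shiftZ ⁻¹' s) = μ s) ∧
      μ (XL L) = 1 ∧
      ∀ w ∈ L,
        0 < μ {x : ℤ → A | (List.ofFn fun i : Fin w.length => x ((i : ℕ) : ℤ)) = w} := by
  subst hL
  let : TopologicalSpace A := ⊥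
  have : DiscreteTopology A := ⟨rfl⟩
  obtain ⟨μ, hμ, hμT, hμX, hμw⟩ := exists_invariant_measure_of_iUnion (mB := ⊤) hLs hne
  -- The measure is built for the discrete σ-algebra on `A` and trimmed to the given one. Trimming
  -- can only increase the outer measure, which matters for the cylinders: they need not be
  -- measurable for the given σ-algebra.
  have hle : (MeasurableSpace.pi : MeasurableSpace (ℤ → A)) ≤
      @MeasurableSpace.pi ℤ (fun _ => A) fun _ => ⊤ :=
    iSup_mono fun _ => MeasurableSpace.comap_mono le_top
  have := isProbabilityMeasure_trim (μ := μ) hle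
  have hμT' := hμT.trim hle hle measurable_shiftZ
  refine ⟨μ.trim hle, this, fun s hs => hμT'.measure_preimage hs.nullMeasurableSet,
    le_antisymm prob_le_one (hμX ▸ le_trim hle), fun w hw => (hμw w hw).trans_le (le_trim hle)⟩

/-- a finite or countable union of uniformly recurrent languages
satisfies the measure condition. -/
theorem stmt8 {A : Type*} [Fintype A] [MeasurableSpace A] {ι : Type*} [Countable ι]
    (Ls : ι → Set (List A))
    (hLs : ∀ i, IsLanguage (Ls i) ∧ UniformlyRecurrent (Ls i))
    (L : Set (List A)) (hL : L = ⋃ i, Ls i) (hlang : IsLanguage L)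
    (hne : L.Nonempty) :
    ∃ μ : Measure (ℤ → A), IsProbabilityMeasure μ ∧
      (∀ s : Set (ℤ → A), MeasurableSet s → μ (shiftZ ⁻¹' s) = μ s) ∧
      μ (XL L) = 1 ∧
      ∀ w ∈ L,
        0 < μ {x : ℤ → A | (List.ofFn fun i : Fin w.length => x ((i : ℕ) : ℤ)) = w} :=
  stmt8_general Ls hLs L hL hne
end

section
/- Suppose a language L has no strong bispecial word. If a right-infinite sequence all of whose factors lie in L is right recurrent (every factor occurs at infinitely many positions), then the set of its factors is a uniformly recurrent language. -/
open List Set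

variable {A : Type*}

variable {F : Finset A}

/-- A right-infinite sequence all of whose factors lie in `L`. -/
def RInf (L : Set (List A)) (x : ℕ → A) : Prop :=
  ∀ m n : ℕ, (List.ofFn fun i : Fin n => x (m + (i : ℕ))) ∈ L

/-- The set of factors of a right-infinite sequence. -/
def factorsOfR (x : ℕ → A) : Set (List A) :=
  {w | ∃ m : ℕ, (List.ofFn fun i : Fin w.length => x (m + (i : ℕ))) = w}

/-- Right recurrence: every factor occurs at arbitrarily large positions. -/
def RightRecurrentSeq (x : ℕ → A) : Prop :=
  ∀ w ∈ factorsOfR x, ∀ N : ℕ, ∃ m : ℕ, N ≤ m ∧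
    (List.ofFn fun i : Fin w.length => x (m + (i : ℕ))) = w

/-!
Without strong bispecial words, `p(n+2) + p(n) ≤ 2 p(n+1)` for the complexity `p` of `L`, so
`s(n) = p(n+1) - p(n)` is non-increasing, hence eventually constant, and from then on every word
is neutral. A neutral left special word has a left special right extension, and there are at most
`s(0)` left special words of each length; so their number stabilises, after which a left special
word is determined by its prefix of some fixed length `N`.

If a factor `v` of `x` is not uniformly recurrent, arbitrarily long factors of `x` avoid `v`, and
by König's lemma there are words ending with `v`, with no other occurrence of `v`, that extend
indefinitely to the left in the same way. Reading `x` leftwards from a late occurrence of such a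
word, one must leave this tree before reaching an earlier occurrence of `v`, which produces such
words that are left special, of arbitrary length. Two of them with the same prefix of length `N`
would be prefixes of one another, giving the longer one a second occurrence of `v`.
-/

def OccursOnlyAsSuffix (v t : List A) : Prop :=
  v <:+ t ∧ ∀ s u, t = s ++ v ++ u → u = []

namespace OccursOnlyAsSuffix

variable {v t : List A}

lemma of_suffix {s : List A} (h : OccursOnlyAsSuffix v t) (hs : s <:+ t)
    (hlen : v.length ≤ s.length) : OccursOnlyAsSuffix v s := by
  obtain ⟨p, rfl⟩ := hs
  refine ⟨List.suffix_of_suffix_length_le h.1 (List.suffix_append p s) hlen, fun s' u hs' => ?_⟩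
  exact h.2 (p ++ s') u (by rw [hs', List.append_assoc, List.append_assoc, List.append_assoc])

lemma eq_of_prefix {w : List A} (h : OccursOnlyAsSuffix v t) (hw : OccursOnlyAsSuffix v w)
    (htw : t <+: w) : t = w := by
  obtain ⟨r, rfl⟩ := htw
  obtain ⟨p, rfl⟩ := h.1
  rw [hw.2 p r rfl, List.append_nil]

end OccursOnlyAsSuffix

def Neutral (L : Set (List A)) (w : List A) : Prop :=
  extCount L w + 1 = (arrSet L w).ncard + (depSet L w).ncard

def leftSpecialOfLength (L : Set (List A)) (n : ℕ) : Set (List A) :=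
  {w | LeftSpecial L w ∧ w.length = n}

section Language

variable {L : Set (List A)} {w : List A}

lemma IsLanguage.mem_of_leftSpecial (hL : IsLanguage L) (hw : LeftSpecial L w) : w ∈ L := by
  obtain ⟨a, ha⟩ := Set.nonempty_of_ncard_ne_zero (ne_zero_of_lt hw)
  exact hL.1 _ ha _ (List.suffix_cons a w).isInfix

variable [Finite A]

lemma LeftSpecial.mono {L' : Set (List A)} (h : L ⊆ L') (hw : LeftSpecial L w) :
    LeftSpecial L' w :=
  hw.trans_le (Set.ncard_le_ncard fun _ ha => h ha)

lemma finite_leftSpecialOfLength (L : Set (List A)) (n : ℕ) :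
    (leftSpecialOfLength L n).Finite :=
  (List.finite_length_eq A n).subset fun _ hw => hw.2

lemma finite_words (L : Set (List A)) (n : ℕ) : {w ∈ L | w.length = n}.Finite :=
  (List.finite_length_eq A n).subset fun _ hw => hw.2

noncomputable def wordsOfLength (L : Set (List A)) (n : ℕ) : Finset (List A) :=
  (finite_words L n).toFinset

@[simp] lemma mem_wordsOfLength {n : ℕ} : w ∈ wordsOfLength L n ↔ w ∈ L ∧ w.length = n :=
  Set.Finite.mem_toFinset _

lemma complexityFn_eq_card (n : ℕ) : complexityFn L n = (wordsOfLength L n).card :=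
  Set.ncard_eq_toFinset_card _ _

lemma complexityFn_eq_sum_ncard_fiber {n k : ℕ} (f : List A → List A)
    (hf : ∀ u ∈ L, u.length = n + k → f u ∈ L ∧ (f u).length = n) :
    complexityFn L (n + k) =
      ∑ w ∈ wordsOfLength L n, {u | u ∈ L ∧ u.length = n + k ∧ f u = w}.ncard := by
  classical
  rw [complexityFn_eq_card, Finset.card_eq_sum_card_fiberwise (f := f)
    fun u hu => mem_wordsOfLength.2 (hf u (mem_wordsOfLength.1 hu).1 (mem_wordsOfLength.1 hu).2)]
  refine Finset.sum_congr rfl fun w _ => ?_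
  rw [← Set.ncard_coe_finset]
  congr 1
  ext u
  simp [and_assoc]

namespace IsLanguage

variable (hL : IsLanguage L)
include hL

lemma leftSpecial_take (hw : LeftSpecial L w) (n : ℕ) : LeftSpecial L (w.take n) :=
  hw.trans_le <| Set.ncard_le_ncard fun a ha =>
    hL.1 _ ha _ (List.take_prefix (n + 1) (a :: w)).isInfix

lemma one_le_ncard_arrSet (hw : w ∈ L) : 1 ≤ (arrSet L w).ncard :=
  (Set.ncard_pos).2 (hL.2.1 w hw)

lemma one_le_ncard_depSet (hw : w ∈ L) : 1 ≤ (depSet L w).ncard :=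
  (Set.ncard_pos).2 (hL.2.2 w hw)

lemma extCount_le_mul (w : List A) :
    extCount L w ≤ (arrSet L w).ncard * (depSet L w).ncard := by
  rw [extCount, ← Set.ncard_prod]
  refine Set.ncard_le_ncard fun p hp => ⟨?_, ?_⟩
  · exact hL.1 _ hp _ (List.prefix_append (p.1 :: w) [p.2]).isInfix
  · exact hL.1 _ hp _ (List.suffix_cons p.1 (w ++ [p.2])).isInfix

lemma extCount_add_one_le (hw : w ∈ L) (hs : ¬ StrongBispecial L w) :
    extCount L w + 1 ≤ (arrSet L w).ncard + (depSet L w).ncard := by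
  have hA := hL.one_le_ncard_arrSet hw
  have hD := hL.one_le_ncard_depSet hw
  by_cases hb : Bispecial L w
  · have := not_lt.1 (not_and.1 hs hb)
    omega
  · have hm := hL.extCount_le_mul w
    rcases not_and_or.1 hb with hb | hb
    · rw [Nat.le_antisymm (not_lt.1 hb) hA, one_mul] at hm
      omega
    · rw [Nat.le_antisymm (not_lt.1 hb) hD, mul_one] at hm
      omega

lemma complexityFn_succ_eq_sum_arrSet (n : ℕ) :
    complexityFn L (n + 1) = ∑ w ∈ wordsOfLength L n, (arrSet L w).ncard := by
  rw [complexityFn_eq_sum_ncard_fiber List.tail fun u hu hlen =>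
    ⟨hL.1 _ hu _ (List.tail_suffix u).isInfix, by simp [hlen]⟩]
  refine Finset.sum_congr rfl fun w hw => ?_
  obtain ⟨-, rfl⟩ := mem_wordsOfLength.1 hw
  rw [← Set.ncard_image_of_injective (arrSet L w) (f := (· :: w))
    fun a b h => List.head_eq_of_cons_eq h]
  refine congrArg Set.ncard (Set.ext fun u => ?_)
  rcases u with _ | ⟨a, u⟩
  · simp
  · simp only [arrSet]
    aesop

lemma complexityFn_succ_eq_sum_depSet (n : ℕ) :
    complexityFn L (n + 1) = ∑ w ∈ wordsOfLength L n, (depSet L w).ncard := by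
  rw [complexityFn_eq_sum_ncard_fiber List.dropLast fun u hu hlen =>
    ⟨hL.1 _ hu _ (List.dropLast_prefix u).isInfix, by simp [hlen]⟩]
  refine Finset.sum_congr rfl fun w hw => ?_
  obtain ⟨-, rfl⟩ := mem_wordsOfLength.1 hw
  rw [← Set.ncard_image_of_injective (depSet L w) (f := (w ++ [·]))
    fun a b h => List.singleton_inj.1 (List.append_cancel_left h)]
  refine congrArg Set.ncard (Set.ext fun u => ?_)
  rcases List.eq_nil_or_concat' u with rfl | ⟨u, b, rfl⟩
  · simp
  · simp only [depSet]
    aesop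

lemma complexityFn_add_two_eq_sum_extCount (n : ℕ) :
    complexityFn L (n + 2) = ∑ w ∈ wordsOfLength L n, extCount L w := by
  rw [complexityFn_eq_sum_ncard_fiber (fun u => u.tail.dropLast) fun u hu hlen =>
    ⟨hL.1 _ hu _ ((List.dropLast_prefix _).isInfix.trans (List.tail_suffix u).isInfix),
      by simp [hlen]⟩]
  refine Finset.sum_congr rfl fun w hw => ?_
  obtain ⟨-, rfl⟩ := mem_wordsOfLength.1 hw
  rw [extCount, ← Set.ncard_image_of_injective _ (f := fun p : A × A => p.1 :: (w ++ [p.2]))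
    fun p q h => by simpa [Prod.ext_iff] using h]
  refine congrArg Set.ncard (Set.ext fun u => ?_)
  rcases u with _ | ⟨a, u⟩
  · simp
  rcases List.eq_nil_or_concat' u with rfl | ⟨u, b, rfl⟩
  · simp
  · aesop

lemma complexityFn_le_succ (n : ℕ) : complexityFn L n ≤ complexityFn L (n + 1) := by
  rw [complexityFn_eq_card, Finset.card_eq_sum_ones, hL.complexityFn_succ_eq_sum_depSet]
  exact Finset.sum_le_sum fun w hw => hL.one_le_ncard_depSet (mem_wordsOfLength.1 hw).1

lemma sum_ncard_arrSet_add_ncard_depSet (n : ℕ) :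
    ∑ w ∈ wordsOfLength L n, ((arrSet L w).ncard + (depSet L w).ncard) =
      complexityFn L (n + 1) + complexityFn L (n + 1) := by
  rw [Finset.sum_add_distrib, ← hL.complexityFn_succ_eq_sum_arrSet,
    ← hL.complexityFn_succ_eq_sum_depSet]

lemma sum_extCount_add_one (n : ℕ) :
    ∑ w ∈ wordsOfLength L n, (extCount L w + 1) = complexityFn L (n + 2) + complexityFn L n := by
  rw [Finset.sum_add_distrib, ← hL.complexityFn_add_two_eq_sum_extCount,
    complexityFn_eq_card (L := L) n, Finset.card_eq_sum_ones]

lemma ncard_leftSpecialOfLength_add_le (n : ℕ) :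
    (leftSpecialOfLength L n).ncard + complexityFn L n ≤ complexityFn L (n + 1) := by
  classical
  have hLS : leftSpecialOfLength L n = ↑((wordsOfLength L n).filter (LeftSpecial L)) := by
    ext w
    simp only [leftSpecialOfLength, Finset.coe_filter, mem_wordsOfLength, Set.mem_ofPred_eq]
    exact ⟨fun h => ⟨⟨hL.mem_of_leftSpecial h.1, h.2⟩, h.1⟩, fun h => ⟨h.2, h.1.2⟩⟩
  rw [hLS, Set.ncard_coe_finset, Finset.card_filter, complexityFn_eq_card (L := L) n,
    Finset.card_eq_sum_ones, ← Finset.sum_add_distrib, hL.complexityFn_succ_eq_sum_arrSet]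
  refine Finset.sum_le_sum fun w hw => ?_
  have := hL.one_le_ncard_arrSet (mem_wordsOfLength.1 hw).1
  unfold LeftSpecial
  split_ifs <;> omega

lemma exists_leftSpecial_append (hw : Neutral L w) (hls : LeftSpecial L w) :
    ∃ b, LeftSpecial L (w ++ [b]) := by
  by_contra! h
  have : extCount L w ≤ (depSet L w).ncard := by
    refine Set.ncard_le_ncard_of_injOn Prod.snd
      (fun p hp => hL.1 _ hp _ (List.suffix_cons p.1 (w ++ [p.2])).isInfix)
      (fun p hp q hq hpq => Prod.ext ?_ hpq) (Set.toFinite _)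
    refine (Set.ncard_le_one (Set.toFinite _)).1 (not_lt.1 (h p.2)) _ hp _ ?_
    rw [hpq]
    exact hq
  unfold Neutral LeftSpecial at *
  omega

lemma exists_leftSpecial_extension {n₀ : ℕ} (hneu : ∀ w ∈ L, n₀ ≤ w.length → Neutral L w)
    (hw : LeftSpecial L w) (hlen : n₀ ≤ w.length) (k : ℕ) :
    ∃ u, LeftSpecial L u ∧ w <+: u ∧ u.length = w.length + k := by
  induction k with
  | zero => exact ⟨w, hw, List.prefix_refl w, rfl⟩
  | succ k ih =>
    obtain ⟨u, hu, hwu, hulen⟩ := ih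
    obtain ⟨b, hb⟩ :=
      hL.exists_leftSpecial_append (hneu u (hL.mem_of_leftSpecial hu) (by omega)) hu
    exact ⟨u ++ [b], hb, hwu.trans (List.prefix_append u [b]), by simp [hulen, Nat.add_assoc]⟩

lemma image_take_leftSpecialOfLength {n₀ N ℓ : ℕ}
    (hneu : ∀ w ∈ L, n₀ ≤ w.length → Neutral L w) (hN : n₀ ≤ N) (hℓ : N ≤ ℓ) :
    List.take N '' leftSpecialOfLength L ℓ = leftSpecialOfLength L N := by
  ext w
  constructor
  · rintro ⟨u, ⟨hu, rfl⟩, rfl⟩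
    exact ⟨hL.leftSpecial_take hu N, by simp [hℓ]⟩
  · rintro ⟨hw, rfl⟩
    obtain ⟨u, hu, hwu, hulen⟩ := hL.exists_leftSpecial_extension hneu hw hN (ℓ - w.length)
    exact ⟨u, ⟨hu, by omega⟩, (List.prefix_iff_eq_take.1 hwu).symm⟩

variable (hns : ∀ w, ¬ StrongBispecial L w)
include hns

lemma complexityFn_add_two_add_le (n : ℕ) :
    complexityFn L (n + 2) + complexityFn L n ≤
      complexityFn L (n + 1) + complexityFn L (n + 1) := by
  rw [← hL.sum_extCount_add_one, ← hL.sum_ncard_arrSet_add_ncard_depSet]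
  exact Finset.sum_le_sum fun w hw => hL.extCount_add_one_le (mem_wordsOfLength.1 hw).1 (hns w)

lemma antitone_complexityFn_sub :
    Antitone fun n => complexityFn L (n + 1) - complexityFn L n :=
  antitone_nat_of_succ_le fun n => by
    have := hL.complexityFn_add_two_add_le hns n
    have := hL.complexityFn_le_succ n
    change complexityFn L (n + 2) - complexityFn L (n + 1) ≤ _
    omega

lemma exists_forall_neutral : ∃ n₀, ∀ w ∈ L, n₀ ≤ w.length → Neutral L w := by
  obtain ⟨n₀, hn₀⟩ := WellFoundedLT.antitone_chain_condition (hL.antitone_complexityFn_sub hns)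
  refine ⟨n₀, fun w hw hlen => ?_⟩
  -- The total slack in `extCount_add_one_le` over the words of length `n` is `s(n) - s(n+1) = 0`.
  have hsum : ∑ u ∈ wordsOfLength L w.length, (extCount L u + 1) =
      ∑ u ∈ wordsOfLength L w.length, ((arrSet L u).ncard + (depSet L u).ncard) := by
    have := hn₀ _ hlen
    have : _ = complexityFn L (w.length + 2) - _ := hn₀ _ (hlen.trans w.length.le_succ)
    have := hL.complexityFn_le_succ w.length
    have : complexityFn L (w.length + 1) ≤ complexityFn L (w.length + 2) :=
      hL.complexityFn_le_succ (w.length + 1)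
    rw [hL.sum_extCount_add_one, hL.sum_ncard_arrSet_add_ncard_depSet]
    omega
  exact (Finset.sum_eq_sum_iff_of_le fun u hu =>
    hL.extCount_add_one_le (mem_wordsOfLength.1 hu).1 (hns u)).1 hsum w (by simp [hw])

lemma exists_injOn_take_leftSpecialOfLength :
    ∃ N, ∀ ℓ, N ≤ ℓ → (leftSpecialOfLength L ℓ).InjOn (List.take N) := by
  obtain ⟨n₀, hneu⟩ := hL.exists_forall_neutral hns
  set B := complexityFn L 1 - complexityFn L 0
  have hbound : ∀ n, (leftSpecialOfLength L n).ncard ≤ B := fun n => by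
    have := hL.ncard_leftSpecialOfLength_add_le n
    have : complexityFn L (n + 1) - complexityFn L n ≤ B :=
      hL.antitone_complexityFn_sub hns (Nat.zero_le n)
    omega
  have himage : ∀ {i j}, i ≤ j →
      List.take (n₀ + i) '' leftSpecialOfLength L (n₀ + j) = leftSpecialOfLength L (n₀ + i) :=
    fun hij => hL.image_take_leftSpecialOfLength hneu (Nat.le_add_right n₀ _)
      (Nat.add_le_add_left hij n₀)
  obtain ⟨k₀, hk₀⟩ := WellFoundedLT.antitone_chain_condition
    (f := fun k => B - (leftSpecialOfLength L (n₀ + k)).ncard) fun i j hij => by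
      refine Nat.sub_le_sub_left ?_ B
      rw [← himage hij]
      exact Set.ncard_image_le (finite_leftSpecialOfLength L _)
  refine ⟨n₀ + k₀, fun ℓ hℓ => ?_⟩
  obtain ⟨k, rfl⟩ := Nat.exists_eq_add_of_le (le_trans (Nat.le_add_right n₀ k₀) hℓ)
  refine Set.injOn_of_ncard_image_eq ?_ (finite_leftSpecialOfLength L _)
  have : B - (leftSpecialOfLength L (n₀ + k₀)).ncard =
      B - (leftSpecialOfLength L (n₀ + k)).ncard := hk₀ k (by omega)
  have := hbound (n₀ + k₀)
  have := hbound (n₀ + k)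
  rw [himage (by omega)]
  omega

lemma exists_prefix_of_take_eq : ∃ N, ∀ u w : List A, LeftSpecial L u → LeftSpecial L w →
    N ≤ u.length → u.length ≤ w.length → u.take N = w.take N → u <+: w := by
  obtain ⟨N, hN⟩ := hL.exists_injOn_take_leftSpecialOfLength hns
  refine ⟨N, fun u w hu hw hNu huw htake => List.prefix_iff_eq_take.2 ?_⟩
  refine hN u.length hNu ⟨hu, rfl⟩ ⟨hL.leftSpecial_take hw _, by simp [huw]⟩ ?_
  rw [List.take_take, min_eq_left hNu, htake]

theorem finite_setOf_leftSpecial_occursOnlyAsSuffix (v : List A) :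
    {w | LeftSpecial L w ∧ OccursOnlyAsSuffix v w}.Finite := by
  obtain ⟨N, hN⟩ := hL.exists_prefix_of_take_eq hns
  have hinj : {w | LeftSpecial L w ∧ OccursOnlyAsSuffix v w ∧ N ≤ w.length}.InjOn
      (List.take N) := fun w₁ h₁ w₂ h₂ h => by
    rcases le_total w₁.length w₂.length with hle | hle
    · exact h₁.2.1.eq_of_prefix h₂.2.1 (hN w₁ w₂ h₁.1 h₂.1 h₁.2.2 hle h)
    · exact (h₂.2.1.eq_of_prefix h₁.2.1 (hN w₂ w₁ h₂.1 h₁.1 h₂.2.2 hle h.symm)).symm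
  have hlong := Set.Finite.of_finite_image
    ((List.finite_length_eq A N).subset (by rintro _ ⟨w, hw, rfl⟩; simp [hw.2.2])) hinj
  refine ((List.finite_length_lt A N).union hlong).subset fun w ⟨hls, hv⟩ => ?_
  rcases lt_or_ge w.length N with h | h
  · exact Or.inl h
  · exact Or.inr ⟨hls, hv, h⟩

end IsLanguage

end Language

def window (x : ℕ → A) (m n : ℕ) : List A := List.ofFn fun i : Fin n => x (m + i)

def LeftExtendsAvoiding (x : ℕ → A) (v t : List A) : Prop :=
  ∀ n, ∃ s : List A, s.length = n ∧ s ++ t ∈ factorsOfR x ∧ OccursOnlyAsSuffix v (s ++ t)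

section Sequence

variable {x : ℕ → A} {v t : List A}

@[simp] lemma length_window (x : ℕ → A) (m n : ℕ) : (window x m n).length = n := by
  simp [window]

lemma window_add (x : ℕ → A) (m a b : ℕ) :
    window x m (a + b) = window x m a ++ window x (m + a) b := by
  simp only [window, List.ofFn_add, Fin.val_castLE, Fin.val_natAdd, Nat.add_assoc]

lemma window_succ (x : ℕ → A) (m n : ℕ) : window x m (n + 1) = x m :: window x (m + 1) n := by
  simp only [window, List.ofFn_succ, Fin.val_zero, Nat.add_zero, Fin.val_succ,
    Nat.add_assoc, Nat.add_comm 1]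

lemma window_mem_factorsOfR (x : ℕ → A) (m n : ℕ) : window x m n ∈ factorsOfR x :=
  ⟨m, by rw [length_window]; rfl⟩

lemma window_eq_of_eq_append {m N : ℕ} {s u t : List A} (h : window x m N = s ++ u ++ t) :
    window x (m + s.length) u.length = u := by
  have hN : N = s.length + (u.length + t.length) := by simpa using congrArg List.length h
  subst hN
  rw [window_add, window_add, ← List.append_assoc] at h
  exact List.append_inj_right (List.append_inj_left h (by simp)) (by simp)

lemma window_infix (x : ℕ → A) {m N k n : ℕ} (h : k + n ≤ N) :
    window x (m + k) n <:+: window x m N := by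
  obtain ⟨r, rfl⟩ := Nat.exists_eq_add_of_le h
  rw [window_add, window_add]
  exact ⟨window x m k, window x (m + (k + n)) r, rfl⟩

lemma factorsOfR_of_infix {w u : List A} (hw : w ∈ factorsOfR x) (h : u <:+: w) :
    u ∈ factorsOfR x := by
  obtain ⟨s, t, rfl⟩ := h
  obtain ⟨m, hm⟩ := hw
  exact ⟨m + s.length, window_eq_of_eq_append hm⟩

lemma factorsOfR_subset {L : Set (List A)} (hx : RInf L x) : factorsOfR x ⊆ L := by
  rintro w ⟨m, hm⟩
  exact hm ▸ hx m w.length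

lemma isLanguage_factorsOfR (hrr : RightRecurrentSeq x) : IsLanguage (factorsOfR x) := by
  refine ⟨fun w hw u hu => factorsOfR_of_infix hw hu, fun w hw => ?_, fun w ⟨m, hm⟩ => ?_⟩
  · obtain ⟨m, hm, hmw⟩ := hrr w hw 1
    refine ⟨x (m - 1), m - 1, ?_⟩
    change window x (m - 1) (w.length + 1) = _
    rw [window_succ, Nat.sub_add_cancel hm]
    exact congrArg _ hmw
  · refine ⟨x (m + w.length), m, ?_⟩
    change window x m (w ++ [_]).length = _
    rw [List.length_append, List.length_singleton, window_add, window_succ]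
    exact congrArg₂ _ hm rfl

lemma not_occursOnlyAsSuffix_window {q n : ℕ} (hq : window x q v.length = v)
    (hn : v.length < n) : ¬ OccursOnlyAsSuffix v (window x q n) := fun h => by
  have := h.2 [] _ (by rw [List.nil_append, ← hq, ← window_add, Nat.add_sub_cancel' hn.le])
  have := congrArg List.length this
  simp only [length_window, List.length_nil] at this
  omega

lemma leftExtendsAvoiding_self (hrr : RightRecurrentSeq x) (hv : v ∈ factorsOfR x)
    (havoid : ∀ n, ∃ u ∈ factorsOfR x, u.length = n ∧ ¬ v <:+: u) :
    LeftExtendsAvoiding x v v := by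
  classical
  intro n
  obtain ⟨u, ⟨i, hi⟩, hulen, hvu⟩ := havoid (n + v.length)
  replace hi : window x i u.length = u := hi
  have hocc : ∃ j, i ≤ j ∧ window x j v.length = v := hrr v hv i
  obtain ⟨hij, hjv⟩ := Nat.find_spec hocc
  set j := Nat.find hocc
  have hnj : i + n < j := by
    by_contra! hle
    have h := window_infix x (m := i) (k := j - i) (n := v.length) (N := n + v.length) (by omega)
    rw [Nat.add_sub_cancel' hij, hjv, ← hulen, hi] at h
    exact hvu h
  have hsv : window x (j - n) n ++ v = window x (j - n) (n + v.length) := by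
    rw [window_add, Nat.sub_add_cancel (by omega : n ≤ j), hjv]
  refine ⟨window x (j - n) n, length_window x _ n, hsv ▸ window_mem_factorsOfR x _ _,
    List.suffix_append _ v, fun s r h => ?_⟩
  by_contra hr
  have hs := window_eq_of_eq_append (hsv.symm.trans h)
  have hslen : s.length < n := by
    have := congrArg List.length h
    have := List.length_pos_of_ne_nil hr
    simp only [List.length_append, length_window] at *
    omega
  exact Nat.find_min hocc (show j - n + s.length < j by omega) ⟨by omega, hs⟩

namespace LeftExtendsAvoiding

lemma factor (ht : LeftExtendsAvoiding x v t) : t ∈ factorsOfR x ∧ OccursOnlyAsSuffix v t := by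
  obtain ⟨s, hs, hst⟩ := ht 0
  rwa [List.length_eq_zero_iff.1 hs] at hst

lemma exists_cons [Finite A] (ht : LeftExtendsAvoiding x v t) :
    ∃ a, LeftExtendsAvoiding x v (a :: t) := by
  by_contra! h
  simp only [LeftExtendsAvoiding, not_forall, not_exists, not_and] at h
  -- König's lemma: an extension of `t` longer than every `bound a` is contradictory.
  choose bound hbound using h
  obtain ⟨M, hM⟩ := (Set.finite_range bound).bddAbove
  obtain ⟨s, hslen, hsx, hsv⟩ := ht (M + 1)
  obtain ⟨s, a, rfl⟩ : ∃ s' a, s = s' ++ [a] := by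
    rcases List.eq_nil_or_concat' s with rfl | h
    · simp at hslen
    · exact h
  rw [List.length_append, List.length_singleton, Nat.add_right_cancel_iff] at hslen
  have hba : bound a ≤ s.length := hslen ▸ hM ⟨a, rfl⟩
  have hsuf : s.drop (s.length - bound a) ++ a :: t <:+ s ++ [a] ++ t :=
    ⟨s.take (s.length - bound a), by rw [← List.append_assoc, List.take_append_drop]; simp⟩
  refine hbound a (s.drop (s.length - bound a)) (by rw [List.length_drop]; omega)
    (factorsOfR_of_infix hsx hsuf.isInfix) (hsv.of_suffix hsuf ?_)
  have := ht.factor.2.1.length_le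
  rw [List.length_append, List.length_cons]
  omega

lemma exists_length [Finite A] (ht : LeftExtendsAvoiding x v t) (k : ℕ) :
    ∃ t', LeftExtendsAvoiding x v t' ∧ t'.length = t.length + k := by
  induction k with
  | zero => exact ⟨t, ht, rfl⟩
  | succ k ih =>
    obtain ⟨t', ht', hlen⟩ := ih
    obtain ⟨a, ha⟩ := ht'.exists_cons
    exact ⟨a :: t', ha, by simp [hlen, Nat.add_assoc]⟩

lemma leftSpecial_or_cons [Finite A] {m : ℕ} (ht : LeftExtendsAvoiding x v t)
    (hm : window x (m + 1) t.length = t) :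
    LeftSpecial (factorsOfR x) t ∨ LeftExtendsAvoiding x v (x m :: t) := by
  refine or_iff_not_imp_right.2 fun hc => ?_
  obtain ⟨a, ha⟩ := ht.exists_cons
  refine (Set.one_lt_ncard_iff (Set.toFinite _)).2 ⟨a, x m, ha.factor.1, ?_, ?_⟩
  · change x m :: t ∈ factorsOfR x
    rw [← hm, ← window_succ]
    exact window_mem_factorsOfR x m _
  · rintro rfl
    exact hc ha

lemma exists_leftSpecial [Finite A] (hrr : RightRecurrentSeq x) {q : ℕ}
    (hq : window x q v.length = v) (ht : LeftExtendsAvoiding x v t) :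
    ∃ w, LeftExtendsAvoiding x v w ∧ t <:+ w ∧ LeftSpecial (factorsOfR x) w := by
  -- Walk leftwards from an occurrence of `t` after `q`: the walk cannot pass position `q`,
  -- where `v` would occur a second time.
  obtain ⟨p, hp, hpt⟩ := hrr t ht.factor.1 (q + 1)
  replace hpt : window x p t.length = t := hpt
  obtain ⟨d, rfl⟩ := Nat.exists_eq_add_of_le hp
  clear hp
  induction d generalizing t with
  | zero =>
    rw [Nat.add_zero] at hpt
    refine (ht.leftSpecial_or_cons hpt).elim (fun h => ⟨t, ht, List.suffix_refl t, h⟩)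
      fun h => absurd h.factor.2 ?_
    rw [← hpt, ← window_succ]
    exact not_occursOnlyAsSuffix_window hq (by have := ht.factor.2.1.length_le; omega)
  | succ d ih =>
    rw [← Nat.add_assoc] at hpt
    refine (ht.leftSpecial_or_cons hpt).elim (fun h => ⟨t, ht, List.suffix_refl t, h⟩)
      fun h => ?_
    obtain ⟨w, hw, htw, hls⟩ := ih h (by rw [List.length_cons, window_succ, hpt])
    exact ⟨w, hw, (List.suffix_cons _ t).trans htw, hls⟩

end LeftExtendsAvoiding

end Sequence

/-- without strong bispecials, a right recurrent sequence with
factors in `L` generates a uniformly recurrent language. -/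
theorem stmt11 [Fintype A] (L : Set (List A)) (hL : IsLanguage L)
    (hns : ∀ w : List A, ¬ StrongBispecial L w)
    (x : ℕ → A) (hx : RInf L x) (hrr : RightRecurrentSeq x) :
    IsLanguage (factorsOfR x) ∧ UniformlyRecurrent (factorsOfR x) := by
  refine ⟨isLanguage_factorsOfR hrr, fun v hv => ?_⟩
  by_contra! havoid
  obtain ⟨B, hB⟩ := ((hL.finite_setOf_leftSpecial_occursOnlyAsSuffix hns v).image
    List.length).bddAbove
  obtain ⟨q, hq⟩ := hv
  obtain ⟨t, ht, htlen⟩ := (leftExtendsAvoiding_self hrr ⟨q, hq⟩ havoid).exists_length (B + 1)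
  obtain ⟨w, hw, htw, hls⟩ := ht.exists_leftSpecial hrr hq
  have := hB ⟨w, ⟨hls.mono (factorsOfR_subset hx), hw.factor.2⟩, rfl⟩
  have := htw.length_le
  omega
end
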